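/- arXiv:2507.10788 — 3 statements merged into one kernel-verified Lean document; each statement's English description precedes it below -/
import Mathlib

section
/- Let φ : (0,1) → ℝ⁺ be integrable, set f = ∫₀¹ φ(x) dx, and for λ > 0 let E_λ = { x ∈ (0,1) : Mφ(x) > λ }, where Mφ is the maximal function of φ relative to (0,1). Then for every λ ≥ f one has |E_λ| ≥ (1/λ) ∫_{E_λ} φ(x) dx. -/
open MeasureTheory Set

/-- The uncentered Hardy–Littlewood maximal function of `φ` relative to the interval `(0,1)`:
`Mφ(x) = sup { (1/|I|) ∫_I |φ| : x ∈ I, I an open subinterval of (0,1) }`. -/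
noncomputable def maximalFn (φ : ℝ → ℝ) (x : ℝ) : ℝ :=
  sSup { r : ℝ | ∃ a b : ℝ, 0 ≤ a ∧ a < x ∧ x < b ∧ b ≤ 1 ∧
    r = (b - a)⁻¹ * ∫ t in Set.Ioo a b, |φ t| }

/-!
Let `U` be the union of the subintervals of `(0,1)` on which the average of `|φ|` exceeds `λ`. It is
open, and by the Lebesgue differentiation theorem it differs from `E_λ` only by the null set of
points around which these averages are unbounded. An endpoint of a connected component `(a, b)` of
`U` lies outside `U`, so if it lies in `(0,1)`, enlarging `(a, b)` slightly across it gives an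
interval on which the average is at most `λ`; if `(a, b) = (0,1)`, the hypothesis `λ ≥ ∫₀¹ φ`
applies instead. Hence `∫_{(a,b)} φ ≤ λ (b - a)` on every component (a rising-sun argument), and
summing over the countably many components gives `∫_{E_λ} φ = ∫_U φ ≤ λ |U| = λ |E_λ|`.
-/

open Filter Topology Metric Function

section ConnectedComponents

variable {X : Type*} [TopologicalSpace X] [LocallyConnectedSpace X] {U : Set X} {x p : X}

theorem IsOpen.mem_connectedComponentIn_of_mem_closure (hU : IsOpen U)
    (hp : p ∈ closure (connectedComponentIn U x)) (hpU : p ∈ U) :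
    p ∈ connectedComponentIn U x := by
  obtain ⟨y, hyp, hyx⟩ :=
    mem_closure_iff.1 hp _ hU.connectedComponentIn (mem_connectedComponentIn hpU)
  rw [connectedComponentIn_eq hyx, ← connectedComponentIn_eq hyp]
  exact mem_connectedComponentIn hpU

theorem IsOpen.setIntegral_le_of_connectedComponentIn [TopologicalSpace.SeparableSpace X]
    [MeasurableSpace X] [OpensMeasurableSpace X] {μ : Measure X} {f g : X → ℝ} (hU : IsOpen U)
    (hf : IntegrableOn f U μ) (hg : IntegrableOn g U μ)
    (h : ∀ x ∈ U,
      ∫ t in connectedComponentIn U x, f t ∂μ ≤ ∫ t in connectedComponentIn U x, g t ∂μ) :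
    ∫ t in U, f t ∂μ ≤ ∫ t in U, g t ∂μ := by
  let C : connectedComponentIn U '' U → Set X := Subtype.val
  have hopen : ∀ i, IsOpen (C i) := by
    rintro ⟨_, x, _, rfl⟩
    exact hU.connectedComponentIn
  have hC : ∀ i, ∀ z ∈ C i, C i = connectedComponentIn U z := by
    rintro ⟨_, x, _, rfl⟩ z hz
    exact connectedComponentIn_eq hz
  have hdisj : Pairwise (Disjoint on C) := fun i j hij => disjoint_left.2 fun z hzi hzj =>
    hij (Subtype.ext ((hC i z hzi).trans (hC j z hzj).symm))
  have : Countable (connectedComponentIn U '' U) := hdisj.countable_of_isOpen_disjoint hopen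
    (by rintro ⟨_, x, hx, rfl⟩; exact ⟨x, mem_connectedComponentIn hx⟩)
  have hunion : ⋃ i, C i = U := by
    refine subset_antisymm (iUnion_subset ?_) fun x hx =>
      mem_iUnion.2 ⟨⟨_, x, hx, rfl⟩, mem_connectedComponentIn hx⟩
    rintro ⟨_, x, _, rfl⟩
    exact connectedComponentIn_subset U x
  have hm i : MeasurableSet (C i) := (hopen i).measurableSet
  rw [← hunion] at hf hg ⊢
  refine hasSum_le ?_ (hasSum_integral_iUnion hm hdisj hf) (hasSum_integral_iUnion hm hdisj hg)
  rintro ⟨_, x, hx, rfl⟩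
  exact h x hx

end ConnectedComponents

theorem IsOpen.exists_connectedComponentIn_eq_Ioo {U : Set ℝ} (hU : IsOpen U)
    (hbdd : Bornology.IsBounded U) {x : ℝ} (hx : x ∈ U) :
    ∃ a b, a ∉ U ∧ b ∉ U ∧ connectedComponentIn U x = Ioo a b := by
  set C := connectedComponentIn U x
  have hC : IsOpen C := hU.connectedComponentIn
  have hne : C.Nonempty := ⟨x, mem_connectedComponentIn hx⟩
  have hCU : C ⊆ U := connectedComponentIn_subset U x
  have hb : BddBelow C := (hbdd.subset hCU).bddBelow
  have ha : BddAbove C := (hbdd.subset hCU).bddAbove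
  have hinf : sInf C ∉ U := fun h => by
    obtain ⟨y, hyC, hy⟩ : ∃ y ∈ C, y < sInf C := ((eventually_nhdsWithin_of_eventually_nhds
      (hC.mem_nhds (hU.mem_connectedComponentIn_of_mem_closure (csInf_mem_closure hne hb) h))).and
      (self_mem_nhdsWithin (s := Iio (sInf C)))).exists
    exact hy.not_ge (csInf_le hb hyC)
  have hsup : sSup C ∉ U := fun h => by
    obtain ⟨y, hyC, hy⟩ : ∃ y ∈ C, sSup C < y := ((eventually_nhdsWithin_of_eventually_nhds
      (hC.mem_nhds (hU.mem_connectedComponentIn_of_mem_closure (csSup_mem_closure hne ha) h))).and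
      (self_mem_nhdsWithin (s := Ioi (sSup C)))).exists
    exact hy.not_ge (le_csSup ha hyC)
  refine ⟨sInf C, sSup C, hinf, hsup, subset_antisymm (fun y hy => ?_)
    (IsConnected.Ioo_csInf_csSup_subset ⟨hne, isPreconnected_connectedComponentIn⟩ hb ha)⟩
  exact ⟨(csInf_le hb hy).lt_of_ne fun h => hinf (h ▸ hCU hy),
    (le_csSup ha hy).lt_of_ne fun h => hsup (h ▸ hCU hy)⟩

theorem setAverage_closedBall_midpoint {g : ℝ → ℝ} {a b : ℝ} (hab : a ≤ b) :
    ⨍ t in closedBall ((a + b) / 2) ((b - a) / 2), g t =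
      (b - a)⁻¹ * ∫ t in Ioo a b, g t := by
  rw [Real.closedBall_eq_Icc, show (a + b) / 2 - (b - a) / 2 = a by ring,
    show (a + b) / 2 + (b - a) / 2 = b by ring, setAverage_eq, Real.volume_real_Icc_of_le hab,
    integral_Icc_eq_integral_Ioo, smul_eq_mul]

theorem ae_exists_average_Ioo_lt {g : ℝ → ℝ} (hg : LocallyIntegrable g) :
    ∀ᵐ x, ∃ ε > 0, ∀ a b, x - ε < a → a < x → x < b → b < x + ε →
      (b - a)⁻¹ * ∫ t in Ioo a b, g t < g x + 1 := by
  filter_upwards [IsUnifLocDoublingMeasure.ae_tendsto_average volume hg 1] with x hx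
  let l : Filter (ℝ × ℝ) := 𝓝 (x, x) ⊓ 𝓟 {p | p.1 < x ∧ x < p.2}
  have hδ : Tendsto (fun p : ℝ × ℝ => (p.2 - p.1) / 2) l (𝓝[>] 0) := by
    refine tendsto_nhdsWithin_iff.2 ⟨?_, mem_inf_of_right fun p hp => ?_⟩
    · exact (Continuous.tendsto' (by fun_prop) (x, x) 0 (by simp)).mono_left inf_le_left
    · simp only [mem_ofPred_eq, mem_Ioi] at hp ⊢
      linarith
  have hmem : ∀ᶠ p in l, x ∈ closedBall ((p.1 + p.2) / 2) (1 * ((p.2 - p.1) / 2)) := by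
    refine mem_inf_of_right fun p hp => ?_
    simp only [mem_ofPred_eq, one_mul, Real.closedBall_eq_Icc, mem_Icc] at hp ⊢
    constructor <;> linarith
  have hlt : ∀ᶠ p in l, (p.2 - p.1)⁻¹ * ∫ t in Ioo p.1 p.2, g t < g x + 1 := by
    filter_upwards [(hx _ _ hδ hmem).eventually (gt_mem_nhds (lt_add_one (g x))),
      mem_inf_of_right (mem_principal_self _)] with p hp hpx
    rwa [← setAverage_closedBall_midpoint (by linarith [hpx.1, hpx.2])]
  obtain ⟨ε, hε, h⟩ := Metric.eventually_nhds_iff.1 (eventually_inf_principal.1 hlt)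
  refine ⟨ε, hε, fun a b hεa hax hxb hbε => h (y := (a, b)) ?_ ⟨hax, hxb⟩⟩
  rw [Prod.dist_eq, max_lt_iff, Real.dist_eq, Real.dist_eq, abs_lt, abs_lt]
  exact ⟨⟨by linarith, by linarith⟩, by linarith, by linarith⟩

theorem ae_bddAbove_average_Ioo {g : ℝ → ℝ} (hg : Integrable g) :
    ∀ᵐ x, BddAbove {r | ∃ a b, a < x ∧ x < b ∧
      r = (b - a)⁻¹ * ∫ t in Ioo a b, g t} := by
  filter_upwards [ae_exists_average_Ioo_lt hg.locallyIntegrable] with x ⟨ε, hε, hsmall⟩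
  refine ⟨max (g x + 1) (ε⁻¹ * ∫ t, |g t|), ?_⟩
  rintro _ ⟨a, b, hax, hxb, rfl⟩
  by_cases h : x - ε < a ∧ b < x + ε
  · exact le_max_of_le_left (hsmall a b h.1 hax hxb h.2).le
  have hεba : ε ≤ b - a := by
    rw [not_and_or, not_lt, not_lt] at h
    rcases h with h | h <;> linarith
  calc (b - a)⁻¹ * ∫ t in Ioo a b, g t ≤ (b - a)⁻¹ * ∫ t, |g t| := by
        gcongr
        · exact inv_nonneg.2 (by linarith)
        · exact (le_abs_self _).trans ((abs_integral_le_integral_abs).trans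
            (setIntegral_le_integral hg.abs (Eventually.of_forall fun _ => abs_nonneg _)))
    _ ≤ ε⁻¹ * ∫ t, |g t| := by
        gcongr
    _ ≤ _ := le_max_right _ _

section MaximalFn

def intervalAverages (φ : ℝ → ℝ) (x : ℝ) : Set ℝ :=
  {r | ∃ a b : ℝ, 0 ≤ a ∧ a < x ∧ x < b ∧ b ≤ 1 ∧
    r = (b - a)⁻¹ * ∫ t in Ioo a b, |φ t|}

/-- `{Mφ > λ}` with `Mφ` valued in `[0, ∞]`. Where the averages are unbounded, `maximalFn` takes
the junk value `sSup = 0`, so `E_λ` may miss such points. -/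
def maximalSuperlevelSet (φ : ℝ → ℝ) (lam : ℝ) : Set ℝ :=
  {x | ∃ r ∈ intervalAverages φ x, lam < r}

variable {φ : ℝ → ℝ} {lam : ℝ}

theorem intervalAverages_nonempty {x : ℝ} (hx : x ∈ Ioo 0 1) :
    (intervalAverages φ x).Nonempty :=
  ⟨_, 0, 1, le_rfl, hx.1, hx.2, le_rfl, rfl⟩

theorem maximalSuperlevelSet_subset_Ioo : maximalSuperlevelSet φ lam ⊆ Ioo 0 1 := by
  rintro x ⟨_, ⟨a, b, h0, hax, hxb, hb1, rfl⟩, -⟩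
  exact ⟨h0.trans_lt hax, hxb.trans_le hb1⟩

theorem isOpen_maximalSuperlevelSet : IsOpen (maximalSuperlevelSet φ lam) := by
  refine isOpen_iff_mem_nhds.2 ?_
  rintro x ⟨_, ⟨a, b, h0, hax, hxb, hb1, rfl⟩, hlt⟩
  exact mem_of_superset (Ioo_mem_nhds hax hxb) fun y hy =>
    ⟨_, ⟨a, b, h0, hy.1, hy.2, hb1, rfl⟩, hlt⟩

theorem ae_bddAbove_intervalAverages (hφ : IntegrableOn φ (Ioo 0 1)) :
    ∀ᵐ x, BddAbove (intervalAverages φ x) := by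
  filter_upwards [ae_bddAbove_average_Ioo
    (IntegrableOn.integrable_indicator hφ.abs measurableSet_Ioo)] with x ⟨M, hM⟩
  refine ⟨M, ?_⟩
  rintro _ ⟨a, b, h0, hax, hxb, hb1, rfl⟩
  refine hM ⟨a, b, hax, hxb, ?_⟩
  rw [setIntegral_indicator measurableSet_Ioo, inter_eq_left.2 (Ioo_subset_Ioo h0 hb1)]

theorem setOf_lt_maximalFn_ae_eq (hφ : IntegrableOn φ (Ioo 0 1)) (lam : ℝ) :
    {x ∈ Ioo 0 1 | lam < maximalFn φ x} =ᵐ[volume] maximalSuperlevelSet φ lam := by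
  filter_upwards [ae_bddAbove_intervalAverages hφ] with x hbdd
  refine propext ⟨fun ⟨hx, hlt⟩ => (lt_csSup_iff hbdd (intervalAverages_nonempty hx)).1 hlt,
    fun hxU => ?_⟩
  have hx := maximalSuperlevelSet_subset_Ioo hxU
  exact ⟨hx, (lt_csSup_iff hbdd (intervalAverages_nonempty hx)).2 hxU⟩

theorem setIntegral_Ioo_abs_le_of_notMem {a b c : ℝ} (ha : 0 ≤ a) (hac : a < c) (hcb : c < b)
    (hb : b ≤ 1) (hc : c ∉ maximalSuperlevelSet φ lam) :
    ∫ t in Ioo a b, |φ t| ≤ lam * (b - a) := by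
  have hle := not_lt.1 fun hlt => hc ⟨_, ⟨a, b, ha, hac, hcb, hb, rfl⟩, hlt⟩
  rwa [inv_mul_le_iff₀ (sub_pos.2 (hac.trans hcb)), mul_comm] at hle

/-- The intervals `(max 0 (a - ε), min 1 (b + ε)) ∋ c` shrink to `(a, b)`. -/
theorem setIntegral_Ioo_abs_le_of_notMem_Icc (hφ : IntegrableOn φ (Ioo 0 1)) (hlam : 0 ≤ lam)
    {a b c : ℝ} (ha : 0 ≤ a) (hb : b ≤ 1) (hc : c ∈ Icc a b) (hc01 : c ∈ Ioo 0 1)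
    (hcU : c ∉ maximalSuperlevelSet φ lam) :
    ∫ t in Ioo a b, |φ t| ≤ lam * (b - a) := by
  have hlim : Tendsto (fun ε => lam * (b - a + 2 * ε)) (𝓝[>] 0) (𝓝 (lam * (b - a))) :=
    (Continuous.tendsto' (by fun_prop) 0 _ (by simp)).mono_left nhdsWithin_le_nhds
  refine ge_of_tendsto hlim (eventually_nhdsWithin_of_forall fun ε (hε : 0 < ε) => ?_)
  set a' := max 0 (a - ε)
  set b' := min 1 (b + ε)
  have hsub : Ioo a' b' ⊆ Ioo 0 1 := Ioo_subset_Ioo (le_max_left _ _) (min_le_left _ _)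
  calc ∫ t in Ioo a b, |φ t| ≤ ∫ t in Ioo a' b', |φ t| :=
        setIntegral_mono_set (IntegrableOn.mono_set hφ.abs hsub)
          (Eventually.of_forall fun _ => abs_nonneg _)
          (Ioo_subset_Ioo (max_le ha (by linarith)) (le_min hb (by linarith))).eventuallyLE
    _ ≤ lam * (b' - a') := setIntegral_Ioo_abs_le_of_notMem (le_max_left _ _)
        (max_lt hc01.1 (by linarith [hc.1])) (lt_min hc01.2 (by linarith [hc.2]))
        (min_le_left _ _) hcU
    _ ≤ lam * (b - a + 2 * ε) := by
        gcongr
        linarith [min_le_right 1 (b + ε), le_max_right 0 (a - ε)]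

theorem setIntegral_connectedComponentIn_le (hφ : IntegrableOn φ (Ioo 0 1))
    (hlam : ∫ t in Ioo 0 1, |φ t| ≤ lam) {x : ℝ} (hx : x ∈ maximalSuperlevelSet φ lam) :
    ∫ t in connectedComponentIn (maximalSuperlevelSet φ lam) x, |φ t| ≤
      ∫ _ in connectedComponentIn (maximalSuperlevelSet φ lam) x, lam := by
  have hlam0 : 0 ≤ lam := (integral_nonneg fun _ => abs_nonneg _).trans hlam
  obtain ⟨a, b, ha, hb, hab⟩ := isOpen_maximalSuperlevelSet.exists_connectedComponentIn_eq_Ioo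
    ((Metric.isBounded_Ioo 0 1).subset maximalSuperlevelSet_subset_Ioo) hx
  have hxab : x ∈ Ioo a b := hab ▸ mem_connectedComponentIn hx
  have hab' : a < b := hxab.1.trans hxab.2
  obtain ⟨ha0, hb1⟩ : 0 ≤ a ∧ b ≤ 1 := (Ioo_subset_Ioo_iff hab').1
    (hab ▸ (connectedComponentIn_subset _ x).trans maximalSuperlevelSet_subset_Ioo)
  rw [hab, setIntegral_const, Real.volume_real_Ioo_of_le hab'.le, smul_eq_mul, mul_comm]
  rcases ha0.lt_or_eq with ha0 | rfl
  · exact setIntegral_Ioo_abs_le_of_notMem_Icc hφ hlam0 ha0.le hb1 (left_mem_Icc.2 hab'.le)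
      ⟨ha0, hab'.trans_le hb1⟩ ha
  rcases hb1.lt_or_eq with hb1 | rfl
  · exact setIntegral_Ioo_abs_le_of_notMem_Icc hφ hlam0 le_rfl hb1.le (right_mem_Icc.2 hab'.le)
      ⟨hab', hb1⟩ hb
  simpa using hlam

theorem setIntegral_maximalSuperlevelSet_le (hφ : IntegrableOn φ (Ioo 0 1))
    (hlam : ∫ t in Ioo 0 1, |φ t| ≤ lam) :
    ∫ t in maximalSuperlevelSet φ lam, |φ t| ≤
      lam * volume.real (maximalSuperlevelSet φ lam) := by
  have hU := maximalSuperlevelSet_subset_Ioo (φ := φ) (lam := lam)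
  have hconst : IntegrableOn (fun _ => lam) (maximalSuperlevelSet φ lam) :=
    integrableOn_const ((measure_mono hU).trans_lt measure_Ioo_lt_top).ne
  calc ∫ t in maximalSuperlevelSet φ lam, |φ t| ≤ ∫ _ in maximalSuperlevelSet φ lam, lam :=
        isOpen_maximalSuperlevelSet.setIntegral_le_of_connectedComponentIn
          (IntegrableOn.mono_set hφ.abs hU) hconst
          fun x hx => setIntegral_connectedComponentIn_le hφ hlam hx
    _ = lam * volume.real (maximalSuperlevelSet φ lam) := by
        rw [setIntegral_const, smul_eq_mul, mul_comm]

end MaximalFn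

/-- For integrable `φ : (0,1) → ℝ⁺` with `f = ∫₀¹ φ` and
`E_λ = {x ∈ (0,1) : Mφ(x) > λ}`, for every `λ ≥ f` one has
`|E_λ| ≥ (1/λ) ∫_{E_λ} φ`. -/
theorem weak_type_lower_bound (φ : ℝ → ℝ)
    (hpos : ∀ x ∈ Set.Ioo (0:ℝ) 1, 0 < φ x)
    (hint : IntegrableOn φ (Set.Ioo 0 1))
    (lam : ℝ) (hlam : (∫ x in Set.Ioo (0:ℝ) 1, φ x) ≤ lam) :
    (volume {x ∈ Set.Ioo (0:ℝ) 1 | lam < maximalFn φ x}).toReal ≥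
      lam⁻¹ * ∫ x in {x ∈ Set.Ioo (0:ℝ) 1 | lam < maximalFn φ x}, φ x := by
  have hE := setOf_lt_maximalFn_ae_eq hint lam
  have habs : ∫ x in Ioo 0 1, |φ x| ≤ lam := by
    rwa [setIntegral_congr_fun measurableSet_Ioo fun x hx => abs_of_pos (hpos x hx)]
  have hlam0 : 0 ≤ lam := (integral_nonneg fun _ => abs_nonneg _).trans habs
  set U := maximalSuperlevelSet φ lam
  have hφU : IntegrableOn φ U := hint.mono_set maximalSuperlevelSet_subset_Ioo
  rw [measure_congr hE, setIntegral_congr_set hE, ge_iff_le, ← measureReal_def]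
  calc lam⁻¹ * ∫ x in U, φ x ≤ lam⁻¹ * ∫ x in U, |φ x| :=
        mul_le_mul_of_nonneg_left (integral_mono hφU hφU.abs fun _ => le_abs_self _)
          (inv_nonneg.2 hlam0)
    _ ≤ lam⁻¹ * (lam * volume.real U) :=
        mul_le_mul_of_nonneg_left (setIntegral_maximalSuperlevelSet_le hint habs)
          (inv_nonneg.2 hlam0)
    _ ≤ volume.real U := by
        rcases hlam0.eq_or_lt with rfl | hlam0
        · simp
        · rw [inv_mul_cancel_left₀ hlam0.ne']
end

section
/- Let c > 1, let p satisfy 1 ≤ p < c/(c−1), and define φ : (0,1) → ℝ⁺ by φ(t) = t^{−1+1/c}. Then ∫₀¹ φ(t)^p dt = 1/(1 + (−1 + 1/c)p) and (∫₀¹ φ(t)^p dt) / (∫₀¹ φ(t) dt)^p = 1/(c^{p−1}(c + p − c·p)). Consequently, the constant 1/(c^{p−1}(c + p − c·p)) in the reverse Hölder inequality ∫₀¹ ψ^p ≤ (1/(c^{p−1}(c + p − c·p)))(∫₀¹ ψ)^p for weights ψ ∈ A₁((0,1),c) is best possible. -/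
open MeasureTheory Set


lemma ioo_rpow_integral {r a b : ℝ} (hr : -1 < r) (hab : a ≤ b) :
    (∫ t in Set.Ioo a b, t ^ r) = (b ^ (r + 1) - a ^ (r + 1)) / (r + 1) := by
  rw [← integral_Ioc_eq_integral_Ioo, ← intervalIntegral.integral_of_le hab,
    integral_rpow (Or.inl hr)]

lemma essInf_rpow_lower {α a b : ℝ} (hα : α < 0) (ha : 0 ≤ a) (hab : a < b) :
    b ^ α ≤ essInf (fun t : ℝ => t ^ α) (volume.restrict (Set.Ioo a b)) := by
  rw [essInf_eq_sSup]
  apply le_csSup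
  · refine ⟨((a + b) / 2) ^ α, fun x hx => ?_⟩
    by_contra hlt
    push_neg at hlt
    simp only [Set.mem_setOf_eq, Measure.restrict_apply' measurableSet_Ioo] at hx
    have hm1 : a < (a + b) / 2 := by linarith
    have hm2 : (a + b) / 2 < b := by linarith
    have hsub : Set.Ioo ((a + b) / 2) b ⊆ {t : ℝ | t ^ α < x} ∩ Set.Ioo a b := by
      intro t ht
      refine ⟨lt_trans (Real.rpow_lt_rpow_of_neg (lt_of_le_of_lt ha hm1) ht.1 hα) hlt,
        hm1.trans ht.1, ht.2⟩
    have h2 : volume (Set.Ioo ((a + b) / 2) b) = 0 := measure_mono_null hsub hx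
    rw [Real.volume_Ioo] at h2
    have := ENNReal.ofReal_eq_zero.mp h2
    linarith
  · have hempty : {t : ℝ | t ^ α < b ^ α} ∩ Set.Ioo a b = ∅ := by
      ext t
      simp only [Set.mem_inter_iff, Set.mem_setOf_eq, Set.mem_Ioo, Set.mem_empty_iff_false,
        iff_false, not_and]
      intro hlt ht1 ht2
      exact absurd hlt
        (not_lt.mpr (Real.rpow_le_rpow_of_nonpos (lt_of_le_of_lt ha ht1) ht2.le hα.le))
    show (volume.restrict (Set.Ioo a b)) {t : ℝ | t ^ α < b ^ α} = 0
    rw [Measure.restrict_apply' measurableSet_Ioo, hempty, measure_empty]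


/-- For `c > 1`, `1 ≤ p < c/(c-1)` and `φ(t) = t^(-1+1/c)` on `(0,1)`:
`∫₀¹ φ^p = 1/(1+(-1+1/c)p)`, and
`(∫₀¹ φ^p)/(∫₀¹ φ)^p = 1/(c^(p-1)(c+p-cp))`; consequently the constant
`1/(c^(p-1)(c+p-cp))` in the reverse Hölder inequality for weights in `A₁((0,1),c)`
is best possible. -/
theorem sharpness_of_reverse_holder (c p : ℝ) (hc : 1 < c) (hp1 : 1 ≤ p)
    (hp2 : p < c / (c - 1)) :
    (∫ t in Set.Ioo (0:ℝ) 1, (t ^ (-1 + 1 / c)) ^ p) = 1 / (1 + (-1 + 1 / c) * p) ∧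
    (∫ t in Set.Ioo (0:ℝ) 1, (t ^ (-1 + 1 / c)) ^ p) /
        (∫ t in Set.Ioo (0:ℝ) 1, t ^ (-1 + 1 / c)) ^ p =
      1 / (c ^ (p - 1) * (c + p - c * p)) ∧
    (∀ A : ℝ,
      (∀ ψ : ℝ → ℝ, (∀ x ∈ Set.Ioo (0:ℝ) 1, 0 < ψ x) →
        IntegrableOn ψ (Set.Ioo 0 1) →
        (∀ a b : ℝ, 0 ≤ a → a < b → b ≤ 1 →
          (b - a)⁻¹ * ∫ x in Set.Ioo a b, ψ x ≤
            c * essInf ψ (volume.restrict (Set.Ioo a b))) →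
        (∫ t in Set.Ioo (0:ℝ) 1, ψ t ^ p) ≤ A * (∫ t in Set.Ioo (0:ℝ) 1, ψ t) ^ p) →
      1 / (c ^ (p - 1) * (c + p - c * p)) ≤ A) := by
  have hc0 : (0:ℝ) < c := by linarith
  have hcne : c ≠ 0 := ne_of_gt hc0
  set α : ℝ := -1 + 1 / c with hαdef
  have hα1 : -1 < α := by
    have : 0 < 1 / c := by positivity
    simp only [hαdef]; linarith
  have hαneg : α < 0 := by
    have : 1 / c < 1 := (div_lt_one hc0).mpr hc
    simp only [hαdef]; linarith
  have hαadd : α + 1 = 1 / c := by simp only [hαdef]; ring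
  have hαadd_pos : 0 < α + 1 := by rw [hαadd]; positivity
  have hpc : p * (c - 1) < c := (lt_div_iff₀ (by linarith)).mp hp2
  have hval : 1 + α * p = (c - p * (c - 1)) / c := by
    simp only [hαdef]; field_simp; ring
  have hden : 0 < 1 + α * p := hval ▸ div_pos (by linarith) hc0
  have hα1p : -1 < α * p := by linarith
  -- first integral
  have hI1 : (∫ t in Set.Ioo (0:ℝ) 1, (t ^ α) ^ p) = 1 / (1 + α * p) := by
    rw [setIntegral_congr_fun measurableSet_Ioo
      (fun t ht => (Real.rpow_mul ht.1.le α p).symm : Set.EqOn (fun t : ℝ => (t ^ α) ^ p)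
        (fun t : ℝ => t ^ (α * p)) (Set.Ioo 0 1)),
      ioo_rpow_integral hα1p zero_le_one, Real.one_rpow,
      Real.zero_rpow (by linarith : α * p + 1 ≠ 0), sub_zero, add_comm (α * p) 1]
  have hI2 : (∫ t in Set.Ioo (0:ℝ) 1, t ^ α) = c := by
    rw [ioo_rpow_integral hα1 zero_le_one, Real.one_rpow,
      Real.zero_rpow (ne_of_gt hαadd_pos), sub_zero, hαadd, one_div_one_div]
  have hcp : (c:ℝ) ^ p = c ^ (p - 1) * c := by
    have := Real.rpow_add_one hcne (p - 1)
    rwa [sub_add_cancel] at this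
  have h2 : c * (1 + α * p) = c + p - c * p := by
    simp only [hαdef]; field_simp; ring
  have hden2 : (1 + α * p) * c ^ p = c ^ (p - 1) * (c + p - c * p) := by
    rw [hcp, ← h2]; ring
  have hcp_pos : 0 < (c:ℝ) ^ p := Real.rpow_pos_of_pos hc0 p
  refine ⟨hI1, ?_, ?_⟩
  · rw [hI1, hI2, div_div, hden2]
  · intro A hA
    have hA1 : ∀ a b : ℝ, 0 ≤ a → a < b → b ≤ 1 →
        (b - a)⁻¹ * ∫ x in Set.Ioo a b, (x:ℝ) ^ α ≤
          c * essInf (fun t : ℝ => t ^ α) (volume.restrict (Set.Ioo a b)) := by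
      intro a b ha hab hb1
      have hb0 : 0 < b := lt_of_le_of_lt ha hab
      have hba : 0 < b - a := by linarith
      have e1 : b ^ (α + 1) = b ^ α * b := Real.rpow_add_one (ne_of_gt hb0) α
      have e2 : a * b ^ α ≤ a ^ (α + 1) := by
        rcases eq_or_lt_of_le ha with h | h
        · rw [← h, Real.zero_rpow (ne_of_gt hαadd_pos), zero_mul]
        · rw [Real.rpow_add_one (ne_of_gt h) α]
          have hba2 : b ^ α ≤ a ^ α := Real.rpow_le_rpow_of_nonpos h hab.le hαneg.le
          nlinarith
      have key : (b - a)⁻¹ * ∫ x in Set.Ioo a b, (x:ℝ) ^ α ≤ c * b ^ α := by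
        have hc_eq : (α + 1)⁻¹ = c := by rw [hαadd, one_div, inv_inv]
        rw [ioo_rpow_integral hα1 hab.le, div_eq_mul_inv, hc_eq]
        have hle : b ^ (α + 1) - a ^ (α + 1) ≤ (b - a) * b ^ α := by nlinarith
        calc (b - a)⁻¹ * ((b ^ (α + 1) - a ^ (α + 1)) * c)
            ≤ (b - a)⁻¹ * ((b - a) * b ^ α * c) := by
              apply mul_le_mul_of_nonneg_left _ (inv_nonneg.mpr hba.le)
              exact mul_le_mul_of_nonneg_right hle hc0.le
          _ = c * b ^ α := by field_simp [ne_of_gt hba]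
      exact key.trans (mul_le_mul_of_nonneg_left (essInf_rpow_lower hαneg ha hab) hc0.le)
    have hA' := hA (fun t => t ^ α) (fun x hx => Real.rpow_pos_of_pos hx.1 α)
      ((intervalIntegrable_iff_integrableOn_Ioo_of_le zero_le_one).mp
        (intervalIntegral.intervalIntegrable_rpow' hα1)) hA1
    rw [hI1, hI2] at hA'
    rw [← hden2]
    calc 1 / ((1 + α * p) * c ^ p) = (1 / (1 + α * p)) / c ^ p := by rw [div_div]
      _ ≤ A := by rw [div_le_iff₀ hcp_pos]; exact hA'
end

section
/- Let c > 1 and let φ : (0,1) → ℝ⁺ be an integrable function belonging to A₁((0,1),c). Let φ* : (0,1) → ℝ be the decreasing rearrangement of φ (the unique decreasing, right-continuous function on (0,1) equimeasurable with φ). Then φ* also belongs to A₁((0,1),c); in particular, (1/t)∫₀ᵗ φ*(u) du ≤ c·φ*(t) for every t ∈ (0,1). -/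
/-!
Fix `t ∈ (0, 1)` and put `m = ψ t`. Since `ψ` decreases, `{ψ > m} ⊆ (0, t)`, so by
equimeasurability `H = {φ > m}` has measure at most `t`, and by the layer-cake formula
`∫₀¹ (ψ - m)⁺ = ∫₀¹ (φ - m)⁺ = ∫_H φ - m |H|`. An interval `I` meeting the complement of `H` in
positive measure has `essinf_I φ ≤ m`, hence `∫_I φ ≤ c m |I|` by the A₁ condition. A rising-sun
argument turns this into `∫_H φ ≤ c m |H|`: cover `H` by an open set of almost the same measure,
enlarge it to the union `W` of all intervals it fills up to a null set, and note that every
component of `W` is a limit of intervals not contained in `W`. Hence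
`∫₀ᵗ ψ ≤ m t + ∫₀¹ (ψ - m)⁺ ≤ m t + (c - 1) m |H| ≤ c m t`.

For the A₁ condition on `(a, b)`: the average of the decreasing `ψ` over `(a, b)` is at most its
average over `(0, b)`, which is the limit of the averages over `(0, s)` as `s → b⁻`, each bounded
by `c ψ s`.
-/

open MeasureTheory Set Filter Topology

theorem setIntegral_sub_const {X : Type*} [MeasurableSpace X] {μ : Measure X} {f : X → ℝ}
    {s : Set X} (hf : IntegrableOn f s μ) (hs : μ s ≠ ⊤) (K : ℝ) :
    ∫ x in s, (f x - K) ∂μ = (∫ x in s, f x ∂μ) - K * μ.real s := by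
  rw [integral_sub hf (integrableOn_const hs), setIntegral_const, smul_eq_mul, mul_comm]

section LevelSets

variable {X : Type*} [MeasurableSpace X] {μ : Measure X} {f g : X → ℝ}

theorem lintegral_ofReal_sub_eq_of_measure_lt_eq (hf : AEMeasurable f μ) (hg : AEMeasurable g μ)
    {m : ℝ} (h : ∀ t, m < t → μ {x | t < f x} = μ {x | t < g x}) :
    ∫⁻ x, ENNReal.ofReal (f x - m) ∂μ = ∫⁻ x, ENNReal.ofReal (g x - m) ∂μ := by
  have hlayer : ∀ F : X → ℝ, AEMeasurable F μ →
      ∫⁻ x, ENNReal.ofReal (F x - m) ∂μ = ∫⁻ t in Ioi 0, μ {x | m + t < F x} := by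
    intro F hF
    have := lintegral_eq_lintegral_meas_lt μ (f := fun x => max (F x - m) 0)
      (ae_of_all _ fun x => le_max_right _ _) ((hF.sub_const m).max aemeasurable_const)
    simp only [ENNReal.ofReal_max, ENNReal.ofReal_zero, max_zero] at this
    refine this.trans (setLIntegral_congr_fun measurableSet_Ioi fun t ht => ?_)
    congr 1
    ext x
    simp only [mem_ofPred_eq, lt_max_iff, not_lt_of_gt (mem_Ioi.1 ht), or_false,
      lt_sub_iff_add_lt']
  rw [hlayer f hf, hlayer g hg]
  exact setLIntegral_congr_fun measurableSet_Ioi fun t ht => h _ (lt_add_of_pos_right m ht)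

theorem integral_max_sub_eq_of_measure_lt_eq (hf : AEMeasurable f μ) (hg : AEMeasurable g μ)
    {m : ℝ} (h : ∀ t, m < t → μ {x | t < f x} = μ {x | t < g x}) :
    ∫ x, max (f x - m) 0 ∂μ = ∫ x, max (g x - m) 0 ∂μ := by
  have hlayer : ∀ F : X → ℝ, AEMeasurable F μ →
      ∫ x, max (F x - m) 0 ∂μ = (∫⁻ x, ENNReal.ofReal (F x - m) ∂μ).toReal := by
    intro F hF
    rw [integral_eq_lintegral_of_nonneg_ae (f := fun x => max (F x - m) 0)
      (ae_of_all _ fun x => le_max_right _ _)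
      ((hF.sub_const m).max aemeasurable_const).aestronglyMeasurable]
    simp only [ENNReal.ofReal_max, ENNReal.ofReal_zero, max_zero]
  rw [hlayer f hf, hlayer g hg, lintegral_ofReal_sub_eq_of_measure_lt_eq hf hg h]

theorem MeasureTheory.Integrable.of_measure_lt_eq (hg : Integrable g μ) (hf : AEMeasurable f μ)
    (hf0 : 0 ≤ᵐ[μ] f) (h : ∀ t, 0 < t → μ {x | t < f x} = μ {x | t < g x}) :
    Integrable f μ := by
  refine ⟨hf.aestronglyMeasurable, (hasFiniteIntegral_iff_ofReal hf0).2 ?_⟩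
  have hlayer := lintegral_ofReal_sub_eq_of_measure_lt_eq hf hg.aemeasurable h
  simp only [sub_zero] at hlayer
  exact hlayer ▸ hg.lintegral_lt_top

theorem measure_pos_eq_of_measure_lt_eq (h : ∀ t, 0 < t → μ {x | t < f x} = μ {x | t < g x}) :
    μ {x | 0 < f x} = μ {x | 0 < g x} := by
  have hunion : ∀ F : X → ℝ, {x | 0 < F x} = ⋃ n : ℕ, {x | 1 / ((n : ℝ) + 1) < F x} := by
    intro F
    ext x
    simp only [mem_ofPred_eq, mem_iUnion]
    exact ⟨exists_nat_one_div_lt, fun ⟨_, hn⟩ => Nat.one_div_pos_of_nat.trans hn⟩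
  have hmono : ∀ F : X → ℝ, Monotone fun n : ℕ => {x | 1 / ((n : ℝ) + 1) < F x} :=
    fun F _ _ hij x (hx : _ < F x) => show _ < F x from (Nat.one_div_le_one_div hij).trans_lt hx
  rw [hunion f, hunion g, (hmono f).measure_iUnion, (hmono g).measure_iUnion]
  simp_rw [h _ Nat.one_div_pos_of_nat]

theorem setIntegral_max_sub_eq {s : Set X} (hf : IntegrableOn f s μ) (hs : μ s ≠ ⊤) (m : ℝ) :
    ∫ x in s, max (f x - m) 0 ∂μ =
      (∫ x in {x | m < f x} ∩ s, f x ∂μ) - m * μ.real ({x | m < f x} ∩ s) := by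
  have hS : NullMeasurableSet {x | m < f x} (μ.restrict s) :=
    nullMeasurableSet_lt aemeasurable_const hf.aemeasurable
  calc ∫ x in s, max (f x - m) 0 ∂μ
        = ∫ x in s, {x | m < f x}.indicator (fun x => f x - m) x ∂μ := by
        congr 1
        ext x
        by_cases hx : m < f x
        · simp [hx, hx.le]
        · simp [hx, not_lt.1 hx]
    _ = ∫ x in {x | m < f x} ∩ s, (f x - m) ∂μ := by
        rw [integral_indicator₀ hS, Measure.restrict_restrict₀ hS]
    _ = _ := setIntegral_sub_const (hf.mono_set inter_subset_right)
        (measure_ne_top_of_subset inter_subset_right hs) m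

theorem setIntegral_le_mul_add_setIntegral_max_sub {s t : Set X} (hts : t ⊆ s)
    (hf : IntegrableOn f s μ) (hs : μ s ≠ ⊤) (m : ℝ) :
    ∫ x in t, f x ∂μ ≤ m * μ.real t + ∫ x in s, max (f x - m) 0 ∂μ := by
  have ht : μ t ≠ ⊤ := measure_ne_top_of_subset hts hs
  have hmax : IntegrableOn (fun x => max (f x - m) 0) s μ :=
    (hf.sub (integrableOn_const hs)).pos_part
  calc ∫ x in t, f x ∂μ = m * μ.real t + ∫ x in t, (f x - m) ∂μ := by
        rw [setIntegral_sub_const (hf.mono_set hts) ht]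
        ring
    _ ≤ m * μ.real t + ∫ x in t, max (f x - m) 0 ∂μ :=
        add_le_add le_rfl <| integral_mono ((hf.mono_set hts).sub (integrableOn_const ht))
          (hmax.mono_set hts) fun x => le_max_left _ _
    _ ≤ m * μ.real t + ∫ x in s, max (f x - m) 0 ∂μ :=
        add_le_add le_rfl <| setIntegral_mono_set hmax (ae_of_all _ fun x => le_max_right _ _)
          hts.eventuallyLE

end LevelSets

theorem AntitoneOn.inter_setOf_lt_subset {ψ : ℝ → ℝ} {α β : ℝ} (hψ : AntitoneOn ψ (Ioo α β))
    {x t : ℝ} (hx : x ∈ Ioo α β) (ht : ψ x ≤ t) : {y | t < ψ y} ∩ Ioo α β ⊆ Ioo α x :=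
  fun _ ⟨hy, hyI⟩ => ⟨hyI.1, lt_of_not_ge fun hxy => ((hψ hx hyI hxy).trans ht).not_gt hy⟩

theorem AntitoneOn.le_essInf_restrict_Ioo {ψ : ℝ → ℝ} {a b : ℝ} (hψ : AntitoneOn ψ (Ioo a b))
    (hab : a < b) {k : ℝ} (hk : ∀ x ∈ Ioo a b, k ≤ ψ x) :
    k ≤ essInf ψ (volume.restrict (Ioo a b)) := by
  obtain ⟨s, hs⟩ := nonempty_Ioo.2 hab
  refine le_essInf_of_ae_le k (ae_restrict_of_forall_mem measurableSet_Ioo hk)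
    (IsCoboundedUnder.of_frequently_le (a := ψ s) ?_)
  rw [frequently_ae_iff, Measure.restrict_apply' measurableSet_Ioo]
  have hsub : Ioo s b ⊆ {x | ψ x ≤ ψ s} ∩ Ioo a b := fun y hy =>
    ⟨hψ hs ⟨hs.1.trans hy.1, hy.2⟩ hy.1.le, hs.1.trans hy.1, hy.2⟩
  exact ((measure_mono hsub).trans_lt' (by simpa using hs.2)).ne'

theorem AntitoneOn.setAverage_Ioo_le {ψ : ℝ → ℝ} {α a b : ℝ} (hψ : AntitoneOn ψ (Ioo α b))
    (hint : IntegrableOn ψ (Ioo α b)) (hαa : α ≤ a) (hab : a < b) :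
    (b - a)⁻¹ * ∫ x in Ioo a b, ψ x ≤ (b - α)⁻¹ * ∫ x in Ioo α b, ψ x := by
  generalize hA : (b - a)⁻¹ * ∫ x in Ioo a b, ψ x = A
  have hIoo : ∀ {p q : ℝ}, p ≤ q → ∫ x in p..q, ψ x = ∫ x in Ioo p q, ψ x := fun hpq => by
    rw [intervalIntegral.integral_of_le hpq, integral_Ioc_eq_integral_Ioo]
  have hint' : IntervalIntegrable ψ volume α b := by
    rwa [intervalIntegrable_iff_integrableOn_Ioo_of_le (hαa.trans hab.le)]
  have hleft : (a - α) * A ≤ ∫ x in Ioo α a, ψ x := by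
    rw [← Real.volume_real_Ioo_of_le hαa, ← smul_eq_mul, ← setIntegral_const]
    refine setIntegral_mono_on (integrableOn_const (by simp))
      (hint.mono_set (Ioo_subset_Ioo_right hab.le)) measurableSet_Ioo fun x hx => ?_
    rw [← hA, inv_mul_le_iff₀ (sub_pos.2 hab), ← Real.volume_real_Ioo_of_le hab.le,
      ← smul_eq_mul, ← setIntegral_const]
    exact setIntegral_mono_on (hint.mono_set (Ioo_subset_Ioo_left hαa)) (integrableOn_const
      (by simp)) measurableSet_Ioo fun y hy => hψ ⟨hx.1, hx.2.trans hab⟩ ⟨hαa.trans_lt hy.1, hy.2⟩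
        (hx.2.trans hy.1).le
  have hsplit : ∫ x in Ioo α b, ψ x = (∫ x in Ioo α a, ψ x) + ∫ x in Ioo a b, ψ x := by
    rw [← hIoo (hαa.trans hab.le), ← hIoo hαa, ← hIoo hab.le,
      intervalIntegral.integral_add_adjacent_intervals (hint'.mono_set (by
        rw [uIcc_of_le hαa, uIcc_of_le (hαa.trans hab.le)]; exact Icc_subset_Icc_right hab.le))
      (hint'.mono_set (by
        rw [uIcc_of_le hab.le, uIcc_of_le (hαa.trans hab.le)]; exact Icc_subset_Icc_left hαa))]
  have hmid : ∫ x in Ioo a b, ψ x = (b - a) * A := by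
    rw [← hA, mul_inv_cancel_left₀ (sub_pos.2 hab).ne']
  rw [le_inv_mul_iff₀ (sub_pos.2 (hαa.trans_lt hab)), hsplit, hmid]
  linear_combination hleft

theorem setIntegral_nonpos_of_connectedComponentIn {X : Type*} [TopologicalSpace X]
    [SecondCountableTopology X] [LocallyConnectedSpace X] [MeasurableSpace X]
    [OpensMeasurableSpace X]
    {μ : Measure X} {h : X → ℝ} {W : Set X} (hW : IsOpen W) (hh : IntegrableOn h W μ)
    (hcomp : ∀ x ∈ W, ∫ y in connectedComponentIn W x, h y ∂μ ≤ 0) :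
    ∫ x in W, h x ∂μ ≤ 0 := by
  set 𝒞 := connectedComponentIn W '' W
  have hdisj : 𝒞.PairwiseDisjoint id := by
    rintro _ ⟨x, -, rfl⟩ _ ⟨y, -, rfl⟩ hne
    refine Set.disjoint_left.2 fun z hzx hzy => hne ?_
    exact (connectedComponentIn_eq hzx).trans (connectedComponentIn_eq hzy).symm
  have hopen : ∀ C ∈ 𝒞, IsOpen C := by
    rintro _ ⟨x, -, rfl⟩
    exact hW.connectedComponentIn
  have hcount : 𝒞.Countable := hdisj.countable_of_isOpen hopen <| by
    rintro _ ⟨x, hx, rfl⟩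
    exact ⟨x, mem_connectedComponentIn hx⟩
  have hunion : ⋃ C : 𝒞, (C : Set X) = W := by
    refine (iUnion_subset ?_).antisymm fun x hx => mem_iUnion.2 ⟨⟨_, x, hx, rfl⟩,
      mem_connectedComponentIn hx⟩
    rintro ⟨_, x, -, rfl⟩
    exact connectedComponentIn_subset W x
  have := hcount.to_subtype
  have hsum := hasSum_integral_iUnion (μ := μ) (s := fun C : 𝒞 => (C : Set X))
    (fun C => (hopen C C.2).measurableSet)
    (fun C D hCD => hdisj C.2 D.2 (Subtype.coe_injective.ne hCD)) (by rwa [hunion])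
  rw [hunion] at hsum
  rw [← hsum.tsum_eq]
  exact tsum_nonpos fun ⟨_, x, hx, hC⟩ => hC ▸ hcomp x hx

theorem IsOpen.connectedComponentIn_eq_Ioo {W : Set ℝ} (hW : IsOpen W)
    (hWb : Bornology.IsBounded W) {x : ℝ} (hx : x ∈ W) :
    connectedComponentIn W x =
      Ioo (sInf (connectedComponentIn W x)) (sSup (connectedComponentIn W x)) := by
  have hCb := hWb.subset (connectedComponentIn_subset W x)
  refine (IsConnected.Ioo_csInf_csSup_subset (isConnected_connectedComponentIn_iff.2 hx)
    hCb.bddBelow hCb.bddAbove).antisymm' ?_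
  rw [← interior_Icc]
  exact interior_maximal (subset_Icc_csInf_csSup hCb.bddBelow hCb.bddAbove)
    hW.connectedComponentIn

section RisingSun

variable {h : ℝ → ℝ} {α β : ℝ}

theorem continuousOn_setIntegral_Ioo_right (hh : IntegrableOn h (Ioo α β)) {a : ℝ} (ha : α ≤ a) :
    ContinuousOn (fun s => ∫ x in Ioo a s, h x) (Icc a β) := by
  rcases le_or_gt a β with haβ | hβa
  · have hint : IntegrableOn h (uIcc a β) := by
      rw [uIcc_of_le haβ]
      exact ((integrableOn_Icc_iff_integrableOn_Ioo (f := h)).2 hh).mono_set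
        (Icc_subset_Icc_left ha)
    have hcont := intervalIntegral.continuousOn_primitive_interval hint
    rw [uIcc_of_le haβ] at hcont
    refine hcont.congr fun s hs => ?_
    dsimp only
    rw [intervalIntegral.integral_of_le hs.1, integral_Ioc_eq_integral_Ioo]
  · simp [Icc_eq_empty_of_lt hβa]

theorem continuousOn_setIntegral_Ioo_left (hh : IntegrableOn h (Ioo α β)) {b : ℝ} (hb : b ≤ β) :
    ContinuousOn (fun s => ∫ x in Ioo s b, h x) (Icc α b) := by
  rcases le_or_gt α b with hαb | hbα
  · have hint : IntegrableOn h (uIcc α b) := by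
      rw [uIcc_of_le hαb]
      exact ((integrableOn_Icc_iff_integrableOn_Ioo (f := h)).2 hh).mono_set
        (Icc_subset_Icc_right hb)
    have hcont := intervalIntegral.continuousOn_primitive_interval_left hint
    rw [uIcc_of_le hαb] at hcont
    refine hcont.congr fun s hs => ?_
    dsimp only
    rw [intervalIntegral.integral_of_le hs.2, integral_Ioc_eq_integral_Ioo]
  · simp [Icc_eq_empty_of_lt hbα]

theorem setIntegral_Ioo_nonpos_of_enlargements (hh : IntegrableOn h (Ioo α β)) {a b : ℝ}
    (hαa : α ≤ a) (hab : a < b) (hbβ : b ≤ β) (hne : α < a ∨ b < β)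
    (hright : ∀ s ∈ Ioo b β, ∫ x in Ioo a s, h x ≤ 0)
    (hleft : ∀ s ∈ Ioo α a, ∫ x in Ioo s b, h x ≤ 0) :
    ∫ x in Ioo a b, h x ≤ 0 := by
  rcases hne with hαa' | hbβ'
  · have hcont : ContinuousWithinAt (fun s => ∫ x in Ioo s b, h x) (Ioo α a) a :=
      ((continuousOn_setIntegral_Ioo_left hh hbβ) a ⟨hαa, hab.le⟩).mono
        fun s hs => ⟨hs.1.le, hs.2.le.trans hab.le⟩
    have : (𝓝[Ioo α a] a).NeBot := by rw [nhdsWithin_Ioo_eq_nhdsLT hαa']; infer_instance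
    exact le_of_tendsto hcont (eventually_nhdsWithin_of_forall hleft)
  · have hcont : ContinuousWithinAt (fun s => ∫ x in Ioo a s, h x) (Ioo b β) b :=
      ((continuousOn_setIntegral_Ioo_right hh hαa) b ⟨hab.le, hbβ⟩).mono
        fun s hs => ⟨hab.le.trans hs.1.le, hs.2.le⟩
    have : (𝓝[Ioo b β] b).NeBot := by rw [nhdsWithin_Ioo_eq_nhdsGT hbβ']; infer_instance
    exact le_of_tendsto hcont (eventually_nhdsWithin_of_forall hright)

theorem setIntegral_nonpos_of_forall_Ioo_not_subset (hh : IntegrableOn h (Ioo α β)) {W : Set ℝ}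
    (hW : IsOpen W) (hWsub : W ⊆ Ioo α β) (hWne : ¬ Ioo α β ⊆ W)
    (hbad : ∀ a b, α ≤ a → a < b → b ≤ β → ¬ Ioo a b ⊆ W → ∫ x in Ioo a b, h x ≤ 0) :
    ∫ x in W, h x ≤ 0 := by
  refine setIntegral_nonpos_of_connectedComponentIn hW (hh.mono_set hWsub) fun x hx => ?_
  have hC := hW.connectedComponentIn_eq_Ioo ((Metric.isBounded_Ioo α β).subset hWsub) hx
  set l := sInf (connectedComponentIn W x)
  set r := sSup (connectedComponentIn W x)
  have hxC : x ∈ Ioo l r := hC ▸ mem_connectedComponentIn hx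
  have hlr : l < r := hxC.1.trans hxC.2
  obtain ⟨hαl, hrβ⟩ := (Ioo_subset_Ioo_iff hlr).1 <|
    hC ▸ (connectedComponentIn_subset W x).trans hWsub
  have hmax : ∀ a b, x ∈ Ioo a b → Ioo a b ⊆ W → l ≤ a ∧ b ≤ r := fun a b hxab hab =>
    (Ioo_subset_Ioo_iff (hxab.1.trans hxab.2)).1
      (hC ▸ isPreconnected_Ioo.subset_connectedComponentIn hxab hab)
  rw [hC]
  refine setIntegral_Ioo_nonpos_of_enlargements hh hαl hlr hrβ ?_
    (fun s hs => hbad l s hαl (hlr.trans hs.1) hs.2.le fun hsub =>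
      (hmax l s ⟨hxC.1, hxC.2.trans hs.1⟩ hsub).2.not_gt hs.1)
    (fun s hs => hbad s r hs.1.le (hs.2.trans hlr) hrβ fun hsub =>
      (hmax s r ⟨hs.2.trans hxC.1, hxC.2⟩ hsub).1.not_gt hs.2)
  by_contra! hfull
  obtain rfl : l = α := le_antisymm hfull.1 hαl
  obtain rfl : r = β := le_antisymm hrβ hfull.2
  exact hWne (hC ▸ connectedComponentIn_subset W x)

theorem setIntegral_nonpos_of_isOpen (hh : IntegrableOn h (Ioo α β)) {U : Set ℝ} (hU : IsOpen U)
    (hUsub : U ⊆ Ioo α β) (hUvol : volume U < volume (Ioo α β))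
    (hbad : ∀ a b, α ≤ a → a < b → b ≤ β → volume (Ioo a b \ U) ≠ 0 →
      ∫ x in Ioo a b, h x ≤ 0) :
    ∫ x in U, h x ≤ 0 := by
  -- Unlike `U`, the union `W` of the subintervals that `U` fills up to a null set contains every
  -- subinterval whose difference with it is null, and it is still a.e. equal to `U`.
  set S := {p : ℝ × ℝ | α ≤ p.1 ∧ p.2 ≤ β ∧ volume (Ioo p.1 p.2 \ U) = 0}
  set W := ⋃ p ∈ S, Ioo p.1 p.2
  obtain ⟨T, hTS, hTc, hTW⟩ :=
    TopologicalSpace.isOpen_biUnion_countable S (fun p => Ioo p.1 p.2) fun _ _ => isOpen_Ioo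
  have hUW : U ⊆ W := by
    intro x hx
    obtain ⟨a, b, hxab, habU⟩ := mem_nhds_iff_exists_Ioo_subset.1 (hU.mem_nhds hx)
    obtain ⟨hαa, hbβ⟩ := (Ioo_subset_Ioo_iff (hxab.1.trans hxab.2)).1 (habU.trans hUsub)
    exact mem_biUnion (x := (a, b)) ⟨hαa, hbβ, by rw [sdiff_eq_empty.2 habU, measure_empty]⟩ hxab
  have hWU : volume (W \ U) = 0 := by
    have hW : W \ U = ⋃ p ∈ T, (Ioo p.1 p.2 \ U) := by simp only [W, ← hTW, iUnion_sdiff]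
    rw [hW]
    exact (measure_biUnion_null_iff hTc).2 fun p hp => (hTS hp).2.2
  have hUW_ae : U =ᵐ[volume] W :=
    ae_eq_set.2 ⟨by rw [sdiff_eq_empty.2 hUW, measure_empty], hWU⟩
  rw [setIntegral_congr_set hUW_ae]
  refine setIntegral_nonpos_of_forall_Ioo_not_subset hh (isOpen_biUnion fun _ _ => isOpen_Ioo)
    (iUnion₂_subset fun p hp => Ioo_subset_Ioo hp.1 hp.2.1) (fun hsub => ?_)
    fun a b ha hab hb hnot => hbad a b ha hab hb fun h0 =>
      hnot (subset_biUnion_of_mem (u := fun p : ℝ × ℝ => Ioo p.1 p.2) (x := (a, b)) ⟨ha, hb, h0⟩)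
  exact (measure_congr hUW_ae ▸ measure_mono hsub).not_gt hUvol

theorem setIntegral_le_mul_volume_of_forall_Ioo {g : ℝ → ℝ} {K : ℝ} {H : Set ℝ}
    (hg : IntegrableOn g (Ioo α β)) (hg0 : 0 ≤ᵐ[volume.restrict (Ioo α β)] g) (hK : 0 ≤ K)
    (hH : H ⊆ Ioo α β) (hHvol : volume H < volume (Ioo α β))
    (hbad : ∀ a b, α ≤ a → a < b → b ≤ β → volume (Ioo a b \ H) ≠ 0 →
      ∫ x in Ioo a b, g x ≤ K * (b - a)) :
    ∫ x in H, g x ≤ K * volume.real H := by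
  have hHfin : volume H ≠ ⊤ := (hHvol.trans_le le_top).ne
  have hgap : volume.real H < β - α := by
    rw [Real.volume_Ioo] at hHvol
    exact ENNReal.toReal_lt_of_lt_ofReal hHvol
  have hopen : ∀ ε ∈ Ioo 0 (β - α - volume.real H),
      ∫ x in H, g x ≤ K * (volume.real H + ε) := by
    rintro ε ⟨hε, hεgap⟩
    obtain ⟨U, hHU, hUo, hUlt⟩ := H.exists_isOpen_lt_add hHfin (ENNReal.ofReal_pos.2 hε).ne'
    have hVsub : U ∩ Ioo α β ⊆ Ioo α β := inter_subset_right
    have hVvol : volume (U ∩ Ioo α β) ≤ ENNReal.ofReal (volume.real H + ε) := by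
      rw [ENNReal.ofReal_add measureReal_nonneg hε.le, ofReal_measureReal hHfin]
      exact (measure_mono inter_subset_left).trans hUlt.le
    have hV := setIntegral_nonpos_of_isOpen (h := fun x => g x - K)
      (hg.sub (integrableOn_const (by simp))) (hUo.inter isOpen_Ioo) hVsub
      (hVvol.trans_lt <| Real.volume_Ioo ▸ (ENNReal.ofReal_lt_ofReal_iff (by
        linarith [measureReal_nonneg (μ := volume) (s := H)])).2 (by linarith))
      fun a b ha hab hb hne => by
        rw [setIntegral_sub_const (hg.mono_set (Ioo_subset_Ioo ha hb)) (by simp),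
          Real.volume_real_Ioo_of_le hab.le, sub_nonpos]
        exact hbad a b ha hab hb fun h0 => hne <|
          measure_mono_null (sdiff_subset_sdiff_right (subset_inter hHU hH)) h0
    rw [setIntegral_sub_const (hg.mono_set hVsub)
      (ne_top_of_le_ne_top ENNReal.ofReal_ne_top hVvol), sub_nonpos] at hV
    calc ∫ x in H, g x ≤ ∫ x in U ∩ Ioo α β, g x :=
          setIntegral_mono_set (hg.mono_set hVsub) (ae_restrict_of_ae_restrict_of_subset hVsub hg0)
            (subset_inter hHU hH).eventuallyLE
      _ ≤ K * volume.real (U ∩ Ioo α β) := hV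
      _ ≤ K * (volume.real H + ε) :=
          mul_le_mul_of_nonneg_left (ENNReal.toReal_le_of_le_ofReal (by positivity) hVvol) hK
  have hlim : Tendsto (fun ε => K * (volume.real H + ε)) (𝓝[>] 0) (𝓝 (K * (volume.real H + 0))) :=
    ((continuous_const.mul (continuous_const.add continuous_id)).tendsto 0).mono_left
      nhdsWithin_le_nhds
  rw [add_zero] at hlim
  exact ge_of_tendsto hlim (mem_of_superset (Ioo_mem_nhdsGT (sub_pos.2 hgap)) hopen)

end RisingSun

def IsA1 (c : ℝ) (f : ℝ → ℝ) : Prop :=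
  ∀ a b : ℝ, 0 ≤ a → a < b → b ≤ 1 →
    (b - a)⁻¹ * ∫ x in Ioo a b, f x ≤ c * essInf f (volume.restrict (Ioo a b))

theorem IsA1.setIntegral_superlevel_le {c : ℝ} {φ : ℝ → ℝ} (hA1 : IsA1 c φ) (hc : 0 ≤ c)
    (hφpos : ∀ x ∈ Ioo (0 : ℝ) 1, 0 < φ x) (hφ : IntegrableOn φ (Ioo 0 1)) {m : ℝ} (hm : 0 ≤ m)
    (hH : volume ({x | m < φ x} ∩ Ioo 0 1) < 1) :
    ∫ x in {x | m < φ x} ∩ Ioo 0 1, φ x ≤ c * m * volume.real ({x | m < φ x} ∩ Ioo 0 1) := by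
  refine setIntegral_le_mul_volume_of_forall_Ioo hφ
    (ae_restrict_of_forall_mem measurableSet_Ioo fun x hx => (hφpos x hx).le) (by positivity)
    inter_subset_right (by simpa using hH) fun a b ha hab hb hne => ?_
  have hess : essInf φ (volume.restrict (Ioo a b)) ≤ m := by
    refine liminf_le_of_frequently_le ?_ (isBoundedUnder_of_eventually_ge (a := 0)
      (ae_restrict_of_forall_mem measurableSet_Ioo fun x hx =>
        (hφpos x ⟨ha.trans_lt hx.1, hx.2.trans_le hb⟩).le))
    have hsub : Ioo a b \ ({x | m < φ x} ∩ Ioo 0 1) ⊆ {x | φ x ≤ m} ∩ Ioo a b := fun x hx =>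
      ⟨show φ x ≤ m from not_lt.1 fun hφx => hx.2 ⟨hφx, ha.trans_lt hx.1.1, hx.1.2.trans_le hb⟩,
        hx.1⟩
    rw [frequently_ae_iff, Measure.restrict_apply' measurableSet_Ioo]
    exact fun h0 => hne (measure_mono_null hsub h0)
  have := (hA1 a b ha hab hb).trans (mul_le_mul_of_nonneg_left hess hc)
  rw [inv_mul_le_iff₀ (sub_pos.2 hab)] at this
  linarith

theorem AntitoneOn.inv_mul_setIntegral_Ioo_zero_le {c : ℝ} {φ ψ : ℝ → ℝ} (hc : 1 ≤ c)
    (hφpos : ∀ x ∈ Ioo (0 : ℝ) 1, 0 < φ x) (hφ : IntegrableOn φ (Ioo 0 1)) (hA1 : IsA1 c φ)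
    (hψ : AntitoneOn ψ (Ioo 0 1)) (hψpos : ∀ x ∈ Ioo (0 : ℝ) 1, 0 < ψ x)
    (hψint : IntegrableOn ψ (Ioo 0 1))
    (hequi : ∀ t, 0 < t → volume.restrict (Ioo 0 1) {x | t < ψ x} =
      volume.restrict (Ioo 0 1) {x | t < φ x})
    {t : ℝ} (ht : t ∈ Ioo (0 : ℝ) 1) :
    t⁻¹ * ∫ u in Ioo 0 t, ψ u ≤ c * ψ t := by
  set m := ψ t
  have hm : 0 < m := hψpos t ht
  set H := {x | m < φ x} ∩ Ioo 0 1
  have hHt : volume H ≤ ENNReal.ofReal t := by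
    calc volume H = volume ({x | m < ψ x} ∩ Ioo 0 1) := by
          rw [← Measure.restrict_apply' measurableSet_Ioo, ← Measure.restrict_apply'
            measurableSet_Ioo, hequi m hm]
      _ ≤ volume (Ioo 0 t) := measure_mono (hψ.inter_setOf_lt_subset ht le_rfl)
      _ = ENNReal.ofReal t := by simp
  have hHφ := hA1.setIntegral_superlevel_le (zero_le_one.trans hc) hφpos hφ hm.le
    (hHt.trans_lt (by simpa using ht.2))
  have hlayer : ∫ x in Ioo 0 1, max (ψ x - m) 0 = ∫ x in Ioo 0 1, max (φ x - m) 0 :=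
    integral_max_sub_eq_of_measure_lt_eq (aemeasurable_restrict_of_antitoneOn measurableSet_Ioo hψ)
      hφ.aemeasurable fun s hs => hequi s (hm.trans hs)
  have hψt := setIntegral_le_mul_add_setIntegral_max_sub (Ioo_subset_Ioo_right ht.2.le) hψint
    (by simp) m
  rw [hlayer, setIntegral_max_sub_eq hφ (by simp), Real.volume_real_Ioo_of_le ht.1.le] at hψt
  have hHt' : volume.real H ≤ t := ENNReal.toReal_le_of_le_ofReal ht.1.le hHt
  rw [inv_mul_le_iff₀ ht.1]
  nlinarith [mul_le_mul_of_nonneg_left hHt' (mul_nonneg (sub_nonneg.2 hc) hm.le)]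

theorem AntitoneOn.pos_of_measure_lt_eq {φ ψ : ℝ → ℝ} (hψ : AntitoneOn ψ (Ioo 0 1))
    (hφpos : ∀ x ∈ Ioo (0 : ℝ) 1, 0 < φ x)
    (hequi : ∀ t, 0 < t → volume.restrict (Ioo 0 1) {x | t < ψ x} =
      volume.restrict (Ioo 0 1) {x | t < φ x})
    {x : ℝ} (hx : x ∈ Ioo (0 : ℝ) 1) : 0 < ψ x := by
  by_contra! hle
  have hfull : volume ({y | 0 < ψ y} ∩ Ioo 0 1) = 1 := by
    rw [← Measure.restrict_apply' measurableSet_Ioo, measure_pos_eq_of_measure_lt_eq hequi,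
      Measure.restrict_apply' measurableSet_Ioo,
      inter_eq_right.2 fun y hy => show y ∈ {y | 0 < φ y} from hφpos y hy, Real.volume_Ioo]
    simp
  have := measure_mono (μ := volume) (hψ.inter_setOf_lt_subset hx hle)
  rw [hfull, Real.volume_Ioo, sub_zero, ENNReal.one_le_ofReal] at this
  exact this.not_gt hx.2

theorem AntitoneOn.isA1 {c : ℝ} {ψ : ℝ → ℝ} (hψ : AntitoneOn ψ (Ioo 0 1))
    (hint : IntegrableOn ψ (Ioo 0 1)) (hc : 0 < c)
    (hkey : ∀ t ∈ Ioo (0 : ℝ) 1, t⁻¹ * ∫ u in Ioo 0 t, ψ u ≤ c * ψ t) : IsA1 c ψ := by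
  intro a b ha hab hb
  have hb0 : 0 < b := ha.trans_lt hab
  have hlim : ∀ s ∈ Ioo a b, b⁻¹ * ∫ u in Ioo 0 b, ψ u ≤ c * ψ s := by
    intro s hs
    have hcont : ContinuousWithinAt (fun t => t⁻¹ * ∫ u in Ioo 0 t, ψ u) (Ioo s b) b :=
      (continuousAt_inv₀ hb0.ne').continuousWithinAt.mul
        ((continuousOn_setIntegral_Ioo_right hint le_rfl b ⟨hb0.le, hb⟩).mono
          fun t ht => ⟨(ha.trans hs.1.le).trans ht.1.le, ht.2.le.trans hb⟩)
    have : (𝓝[Ioo s b] b).NeBot := by rw [nhdsWithin_Ioo_eq_nhdsLT hs.2]; infer_instance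
    refine le_of_tendsto hcont (eventually_nhdsWithin_of_forall fun t ht => ?_)
    have hs01 : s ∈ Ioo (0 : ℝ) 1 := ⟨ha.trans_lt hs.1, hs.2.trans_le hb⟩
    have ht01 : t ∈ Ioo (0 : ℝ) 1 := ⟨hs01.1.trans ht.1, ht.2.trans_le hb⟩
    exact (hkey t ht01).trans (mul_le_mul_of_nonneg_left (hψ hs01 ht01 ht.1.le) hc.le)
  calc (b - a)⁻¹ * ∫ x in Ioo a b, ψ x ≤ (b - 0)⁻¹ * ∫ u in Ioo 0 b, ψ u :=
        (hψ.mono (Ioo_subset_Ioo_right hb)).setAverage_Ioo_le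
          (hint.mono_set (Ioo_subset_Ioo_right hb)) ha hab
    _ ≤ c * essInf ψ (volume.restrict (Ioo a b)) := by
      rw [sub_zero, ← div_le_iff₀' hc]
      exact (hψ.mono (Ioo_subset_Ioo ha hb)).le_essInf_restrict_Ioo hab fun s hs =>
        (div_le_iff₀' hc).2 (hlim s hs)

theorem decreasing_rearrangement_is_A1_general (c : ℝ) (hc : 1 < c) (φ ψ : ℝ → ℝ)
    (hpos : ∀ x ∈ Set.Ioo (0:ℝ) 1, 0 < φ x)
    (hint : IntegrableOn φ (Set.Ioo 0 1))
    (hA1 : ∀ a b : ℝ, 0 ≤ a → a < b → b ≤ 1 →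
      (b - a)⁻¹ * ∫ x in Set.Ioo a b, φ x ≤
        c * essInf φ (volume.restrict (Set.Ioo a b)))
    (hanti : AntitoneOn ψ (Set.Ioo 0 1))
    (hequi : ∀ lam : ℝ, 0 < lam →
      volume {x ∈ Set.Ioo (0:ℝ) 1 | lam < ψ x} =
        volume {x ∈ Set.Ioo (0:ℝ) 1 | lam < φ x}) :
    (∀ a b : ℝ, 0 ≤ a → a < b → b ≤ 1 →
      (b - a)⁻¹ * ∫ x in Set.Ioo a b, ψ x ≤
        c * essInf ψ (volume.restrict (Set.Ioo a b))) ∧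
    (∀ t ∈ Set.Ioo (0:ℝ) 1, t⁻¹ * ∫ u in Set.Ioo (0:ℝ) t, ψ u ≤ c * ψ t) := by
  have hdist : ∀ t, 0 < t → volume.restrict (Ioo 0 1) {x | t < ψ x} =
      volume.restrict (Ioo 0 1) {x | t < φ x} := fun t ht => by
    rw [Measure.restrict_apply' measurableSet_Ioo, Measure.restrict_apply' measurableSet_Ioo,
      inter_comm, inter_comm _ (Ioo 0 1)]
    exact hequi t ht
  have hψpos : ∀ x ∈ Ioo (0 : ℝ) 1, 0 < ψ x := fun x hx =>
    hanti.pos_of_measure_lt_eq hpos hdist hx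
  have hψint : IntegrableOn ψ (Ioo 0 1) :=
    Integrable.of_measure_lt_eq hint (aemeasurable_restrict_of_antitoneOn measurableSet_Ioo hanti)
      (ae_restrict_of_forall_mem measurableSet_Ioo fun x hx => (hψpos x hx).le) hdist
  have hkey : ∀ t ∈ Ioo (0 : ℝ) 1, t⁻¹ * ∫ u in Ioo 0 t, ψ u ≤ c * ψ t := fun t ht =>
    hanti.inv_mul_setIntegral_Ioo_zero_le hc.le hpos hint hA1 hψpos hψint hdist ht
  exact ⟨hanti.isA1 hψint (zero_lt_one.trans hc) hkey, hkey⟩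

/-- If `c > 1` and `φ : (0,1) → ℝ⁺` is integrable and belongs to
`A₁((0,1),c)`, and `ψ = φ*` is the decreasing rearrangement of `φ` (decreasing,
right-continuous on `(0,1)` and equimeasurable with `φ`), then `ψ` also belongs to
`A₁((0,1),c)`; in particular `(1/t)∫₀ᵗ ψ ≤ c·ψ(t)` for every `t ∈ (0,1)`. -/
theorem decreasing_rearrangement_is_A1 (c : ℝ) (hc : 1 < c) (φ ψ : ℝ → ℝ)
    (hpos : ∀ x ∈ Set.Ioo (0:ℝ) 1, 0 < φ x)
    (hint : IntegrableOn φ (Set.Ioo 0 1))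
    (hA1 : ∀ a b : ℝ, 0 ≤ a → a < b → b ≤ 1 →
      (b - a)⁻¹ * ∫ x in Set.Ioo a b, φ x ≤
        c * essInf φ (volume.restrict (Set.Ioo a b)))
    (hanti : AntitoneOn ψ (Set.Ioo 0 1))
    (hrc : ∀ t ∈ Set.Ioo (0:ℝ) 1, ContinuousWithinAt ψ (Set.Ici t) t)
    (hequi : ∀ lam : ℝ, 0 < lam →
      volume {x ∈ Set.Ioo (0:ℝ) 1 | lam < ψ x} =
        volume {x ∈ Set.Ioo (0:ℝ) 1 | lam < φ x}) :
    (∀ a b : ℝ, 0 ≤ a → a < b → b ≤ 1 →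
      (b - a)⁻¹ * ∫ x in Set.Ioo a b, ψ x ≤
        c * essInf ψ (volume.restrict (Set.Ioo a b))) ∧
    (∀ t ∈ Set.Ioo (0:ℝ) 1, t⁻¹ * ∫ u in Set.Ioo (0:ℝ) t, ψ u ≤ c * ψ t) :=
  decreasing_rearrangement_is_A1_general c hc φ ψ hpos hint hA1 hanti hequi
end
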